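/- arXiv:1612.07882 — 4 statements merged into one kernel-verified Lean document; each statement's English description precedes it below -/
import Mathlib

section
/- With T̃ = 2N σ₀² σ₁²/(σ₀² + σ₁²), the asymptotic BER of the suboptimal detector with complex Gaussian source equals Q(√N |σ₁² − σ₀²|/(σ₀² + σ₁²)). Writing σᵢ² = |hᵢ|² P_s + N_w and γ = P_s/N_w, this equals Q(√N Δ/(Σ + 2/γ)) where Δ = ||h₀|² − |h₁|²| and Σ = |h₀|² + |h₁|². -/
open Real MeasureTheory

/-- The Gaussian Q-function. -/
noncomputable def gaussQ (x : ℝ) : ℝ :=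
  ∫ t in Set.Ioi x, (2 * Real.pi) ^ (-(1:ℝ)/2) * Real.exp (-t ^ 2 / 2)

lemma gauss_integrable :
    Integrable (fun t : ℝ => (2 * Real.pi) ^ (-(1:ℝ)/2) * Real.exp (-t ^ 2 / 2)) := by
  have h : Integrable (fun t : ℝ => Real.exp (-(1/2 : ℝ) * t ^ 2)) :=
    integrable_exp_neg_mul_sq (by norm_num)
  have := h.const_mul ((2 * Real.pi) ^ (-(1:ℝ)/2))
  refine this.congr ?_
  filter_upwards with t
  ring_nf

lemma gauss_total :
    (∫ t : ℝ, (2 * Real.pi) ^ (-(1:ℝ)/2) * Real.exp (-t ^ 2 / 2)) = 1 := by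
  have h : (∫ t : ℝ, Real.exp (-(1/2 : ℝ) * t ^ 2)) = Real.sqrt (Real.pi / (1/2)) :=
    integral_gaussian (1/2)
  have h2 : (∫ t : ℝ, Real.exp (-t ^ 2 / 2)) = Real.sqrt (2 * Real.pi) := by
    rw [show (2 * Real.pi) = Real.pi / (1/2) by ring, ← h]
    congr 1; funext t; ring_nf
  rw [integral_const_mul, h2]
  have hpos : (0:ℝ) < 2 * Real.pi := by positivity
  rw [show (-(1:ℝ)/2) = -(1/2 : ℝ) by ring, Real.rpow_neg hpos.le,
    ← Real.sqrt_eq_rpow]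
  field_simp

lemma gaussQ_neg (x : ℝ) : gaussQ (-x) = 1 - gaussQ x := by
  have key : gaussQ x + gaussQ (-x) = 1 := by
    unfold gaussQ
    have hsym : (∫ t in Set.Ioi (-x), (2 * Real.pi) ^ (-(1:ℝ)/2) * Real.exp (-t ^ 2 / 2))
        = ∫ t in Set.Iic x, (2 * Real.pi) ^ (-(1:ℝ)/2) * Real.exp (-t ^ 2 / 2) := by
      have h := integral_comp_neg_Ioi (c := -x)
        (f := fun t : ℝ => (2 * Real.pi) ^ (-(1:ℝ)/2) * Real.exp (-t ^ 2 / 2))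
      simp only [neg_neg, neg_sq] at h
      exact h
    rw [hsym, add_comm, intervalIntegral.integral_Iic_add_Ioi gauss_integrable.integrableOn
      gauss_integrable.integrableOn, gauss_total]
  linarith

/-- Asymptotic BER of the suboptimal detector with complex Gaussian source. With
`T̃ = 2N σ₀² σ₁²/(σ₀² + σ₁²)`, the BER equals `Q(√N |σ₁² − σ₀²|/(σ₀² + σ₁²))`, and with
`σᵢ² = |hᵢ|² P_s + N_w`, `γ = P_s/N_w`, it equals `Q(√N Δ/(Σ + 2/γ))`. -/
theorem stmt8 (a0 a1 : ℝ) (ha0 : 0 ≤ a0) (ha1 : 0 ≤ a1) (hne : a0 ≠ a1)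
    (Ps Nw : ℝ) (hPs : 0 < Ps) (hNw : 0 < Nw)
    (N : ℝ) (hN : 0 < N)
    (s0 s1 γ Δ Sg T : ℝ)
    (hs0 : s0 = a0 * Ps + Nw) (hs1 : s1 = a1 * Ps + Nw)
    (hγ : γ = Ps / Nw) (hΔ : Δ = |a0 - a1|) (hSg : Sg = a0 + a1)
    (hT : T = 2 * N * s0 * s1 / (s0 + s1)) :
    (1 / 2) * gaussQ ((T - N * min s0 s1) / (Real.sqrt N * min s0 s1)) +
        (1 / 2) * (1 - gaussQ ((T - N * max s0 s1) / (Real.sqrt N * max s0 s1)))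
      = gaussQ (Real.sqrt N * |s1 - s0| / (s0 + s1)) ∧
    gaussQ (Real.sqrt N * |s1 - s0| / (s0 + s1)) =
      gaussQ (Real.sqrt N * Δ / (Sg + 2 / γ)) := by
  have hs0p : 0 < s0 := by rw [hs0]; positivity
  have hs1p : 0 < s1 := by rw [hs1]; positivity
  have hsum : 0 < s0 + s1 := by linarith
  have hsq : 0 < Real.sqrt N := Real.sqrt_pos.mpr hN
  have hNsq : Real.sqrt N * Real.sqrt N = N := Real.mul_self_sqrt hN.le
  set r := Real.sqrt N
  have harg : ∀ m M : ℝ, 0 < m → 0 < M → min s0 s1 = m → max s0 s1 = M →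
      m ≤ M → m + M = s0 + s1 → m * M = s0 * s1 →
      (T - N * m) / (r * m) = r * (M - m) / (s0 + s1) ∧
      (T - N * M) / (r * M) = -(r * (M - m) / (s0 + s1)) := by
    intro m M hm hM _ _ _ hadd hmul
    constructor
    · rw [hT, ← hadd, show 2 * N * s0 * s1 = 2 * N * (m * M) by rw [hmul]; ring, ← hNsq]
      field_simp
      ring
    · rw [hT, ← hadd, show 2 * N * s0 * s1 = 2 * N * (m * M) by rw [hmul]; ring, ← hNsq]
      field_simp
      ring
  have habs : |s1 - s0| = max s0 s1 - min s0 s1 := by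
    rcases le_total s0 s1 with h | h
    · rw [abs_of_nonneg (by linarith), max_eq_right h, min_eq_left h]
    · rw [abs_of_nonpos (by linarith), max_eq_left h, min_eq_right h]; ring
  obtain ⟨h1, h2⟩ := harg (min s0 s1) (max s0 s1) (lt_min hs0p hs1p)
    (lt_max_of_lt_left hs0p) rfl rfl (min_le_max) (min_add_max s0 s1)
    (min_mul_max s0 s1)
  constructor
  · rw [h1, h2, ← habs, gaussQ_neg]
    ring
  · congr 1
    have hsum2 : s0 + s1 = Ps * (Sg + 2 / γ) := by
      rw [hs0, hs1, hSg, hγ]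
      field_simp
      ring
    have habs2 : |s1 - s0| = Ps * Δ := by
      rw [hs1, hs0, hΔ, abs_sub_comm a0 a1,
        show a1 * Ps + Nw - (a0 * Ps + Nw) = (a1 - a0) * Ps by ring,
        abs_mul, abs_of_pos hPs]
      ring
    rw [habs2, hsum2, show r * (Ps * Δ) = Ps * (r * Δ) by ring,
      mul_div_mul_left _ _ hPs.ne']
end

section
/- Fix N > 0 and channel gains |h₀|² ≠ |h₁|². The function γ ↦ Q(√N Δ/(Σ + 2/γ)) on (0, ∞), with Δ = ||h₀|² − |h₁|²| > 0 and Σ = |h₀|² + |h₁|², is strictly decreasing, and its limit as γ → ∞ is Q(√N Δ/Σ) > 0. In particular the asymptotic BER is bounded below by the positive error floor Q(√N Δ/Σ) for all SNR values γ. -/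
open Real MeasureTheory Filter

private noncomputable def gf (t : ℝ) : ℝ := (2 * Real.pi) ^ (-(1:ℝ)/2) * Real.exp (-t ^ 2 / 2)

private lemma gf_pos (t : ℝ) : 0 < gf t := by
  unfold gf
  positivity

private lemma gf_int : Integrable gf := by
  have h : Integrable (fun t : ℝ => Real.exp (-(1/2 : ℝ) * t ^ 2)) :=
    integrable_exp_neg_mul_sq (by norm_num)
  have := h.const_mul ((2 * Real.pi) ^ (-(1:ℝ)/2))
  refine this.congr ?_
  filter_upwards with t
  unfold gf
  ring_nf

set_option maxHeartbeats 1000000 in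
private lemma gaussQ_eq (x : ℝ) : gaussQ x = gaussQ 0 - ∫ t in (0:ℝ)..x, gf t := by
  have h1 : gaussQ 0 = (∫ t, gf t) - ∫ t in Set.Iic (0:ℝ), gf t := by
    rw [eq_sub_iff_add_eq, add_comm]
    exact intervalIntegral.integral_Iic_add_Ioi gf_int.integrableOn gf_int.integrableOn
  have h2 : gaussQ x = (∫ t, gf t) - ∫ t in Set.Iic x, gf t := by
    rw [eq_sub_iff_add_eq, add_comm]
    exact intervalIntegral.integral_Iic_add_Ioi gf_int.integrableOn gf_int.integrableOn
  have h3 : ∫ t in (0:ℝ)..x, gf t = (∫ t in Set.Iic x, gf t) - ∫ t in Set.Iic (0:ℝ), gf t :=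
    (intervalIntegral.integral_Iic_sub_Iic gf_int.integrableOn gf_int.integrableOn).symm
  rw [h1, h2, h3]; ring

private lemma gaussQ_continuous : Continuous gaussQ := by
  have : Continuous fun x : ℝ => gaussQ 0 - ∫ t in (0:ℝ)..x, gf t :=
    continuous_const.sub (gf_int.continuous_primitive 0)
  exact this.congr fun x => (gaussQ_eq x).symm

private lemma gaussQ_strictAnti : StrictAnti gaussQ := by
  intro x y hxy
  rw [gaussQ_eq x, gaussQ_eq y]
  have h : (∫ t in (0:ℝ)..x, gf t) + ∫ t in x..y, gf t = ∫ t in (0:ℝ)..y, gf t :=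
    intervalIntegral.integral_add_adjacent_intervals gf_int.intervalIntegrable
      gf_int.intervalIntegrable
  have hpos : 0 < ∫ t in x..y, gf t :=
    intervalIntegral.intervalIntegral_pos_of_pos gf_int.intervalIntegrable
      (fun t => gf_pos t) hxy
  linarith

private lemma gaussQ_pos (x : ℝ) : 0 < gaussQ x := by
  unfold gaussQ
  have : (∫ t in Set.Ioi x, gf t) > 0 := by
    refine (setIntegral_pos_iff_support_of_nonneg_ae ?_ gf_int.integrableOn).2 ?_
    · filter_upwards with t using (gf_pos t).le
    · have : Function.support gf = Set.univ := by
        ext t; simp [Function.support, (gf_pos t).ne']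
      rw [this, Set.univ_inter]
      simp [Real.volume_Ioi]
  simpa [gf] using this

/-- Error floor for the complex Gaussian ambient source: the asymptotic BER
`γ ↦ Q(√N Δ/(Σ + 2/γ))` is strictly decreasing in the SNR `γ`, tends to the
positive error floor `Q(√N Δ/Σ)` as `γ → ∞`, and is bounded below by it. -/
theorem stmt9 (a0 a1 : ℝ) (ha0 : 0 ≤ a0) (ha1 : 0 ≤ a1) (hne : a0 ≠ a1)
    (N : ℝ) (hN : 0 < N)
    (Δ Sg : ℝ) (hΔ : Δ = |a0 - a1|) (hSg : Sg = a0 + a1) :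
    StrictAntiOn (fun γ : ℝ => gaussQ (Real.sqrt N * Δ / (Sg + 2 / γ))) (Set.Ioi 0) ∧
    Tendsto (fun γ : ℝ => gaussQ (Real.sqrt N * Δ / (Sg + 2 / γ))) atTop
      (nhds (gaussQ (Real.sqrt N * Δ / Sg))) ∧
    0 < gaussQ (Real.sqrt N * Δ / Sg) ∧
    ∀ γ : ℝ, 0 < γ →
      gaussQ (Real.sqrt N * Δ / Sg) ≤ gaussQ (Real.sqrt N * Δ / (Sg + 2 / γ)) := by
  have hΔpos : 0 < Δ := by
    rw [hΔ]; exact abs_pos.2 (sub_ne_zero.2 hne)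
  have hSgpos : 0 < Sg := by
    rcases (lt_or_eq_of_le ha0) with h | h
    · linarith
    · rcases (lt_or_eq_of_le ha1) with h1 | h1
      · linarith
      · exact absurd (h.symm.trans h1) hne
  have hA : 0 < Real.sqrt N * Δ := mul_pos (Real.sqrt_pos.2 hN) hΔpos
  have harg : ∀ γ : ℝ, 0 < γ → Real.sqrt N * Δ / (Sg + 2 / γ) < Real.sqrt N * Δ / Sg := by
    intro γ hγ
    exact div_lt_div_of_pos_left hA hSgpos (lt_add_of_pos_right Sg (by positivity))
  refine ⟨?_, ?_, gaussQ_pos _, ?_⟩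
  · intro γ₁ h₁ γ₂ h₂ h12
    have hγ₁ : (0:ℝ) < γ₁ := h₁
    have hγ₂ : (0:ℝ) < γ₂ := h₂
    apply gaussQ_strictAnti
    apply div_lt_div_of_pos_left hA (by positivity)
    have : 2 / γ₂ < 2 / γ₁ := div_lt_div_of_pos_left (by norm_num) hγ₁ h12
    linarith
  · have hinner : Tendsto (fun γ : ℝ => Real.sqrt N * Δ / (Sg + 2 / γ)) atTop
        (nhds (Real.sqrt N * Δ / Sg)) := by
      have h2 : Tendsto (fun γ : ℝ => Sg + 2 / γ) atTop (nhds Sg) := by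
        simpa using tendsto_const_nhds.add (Tendsto.div_atTop (tendsto_const_nhds : Tendsto (fun _ : ℝ => (2:ℝ)) atTop (nhds 2)) tendsto_id)
      exact tendsto_const_nhds.div h2 hSgpos.ne'
    exact (gaussQ_continuous.continuousAt.tendsto).comp hinner
  · intro γ hγ
    exact gaussQ_strictAnti.antitone (harg γ hγ).le
end

section
/- Let μᵢ = N σᵢ² and ςᵢ = 2N|hᵢ|² P_s N_w + N N_w² with σᵢ² = |hᵢ|² P_s + N_w, |h₀|² ≠ |h₁|², and γ = P_s/N_w > 0. Then the positive solution T of (2πς₀)^{−1/2} exp(−(T−μ₀)²/(2ς₀)) = (2πς₁)^{−1/2} exp(−(T−μ₁)²/(2ς₁)) is T = N N_w/2 + N N_w √((|h₀|²γ + 1/2)(|h₁|²γ + 1/2)[1 + 2 ln((2|h₀|²γ+1)/(2|h₁|²γ+1))/(Nγ(|h₀|² − |h₁|²))]), provided the bracketed quantity is nonnegative. -/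
/-!
Taking logarithms, equality of the two Gaussian densities becomes the quadratic equation
`ς₀ (T - μ₁)² - ς₁ (T - μ₀)² = ς₀ ς₁ log (ς₀ / ς₁)`. In the units `N N_w` its leading
coefficient is `2γ(|h₀|² - |h₁|²)` and, after completing the square, it reads
`(T - N N_w / 2)² = (N N_w)² D` with `D` the radicand of the claim. Since `log (x / y)` has the
sign of `x - y`, the bracket in `D` is at least `1`, so `D ≥ 1/4`; hence the root
`N N_w / 2 - N N_w √D` is not positive and only the stated root remains.
-/

open Real

theorem gaussian_density_eq_iff {v₀ v₁ : ℝ} (h₀ : 0 < v₀) (h₁ : 0 < v₁) (m₀ m₁ x : ℝ) :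
    (2 * π * v₀) ^ (-(1:ℝ)/2) * exp (-(x - m₀) ^ 2 / (2 * v₀)) =
        (2 * π * v₁) ^ (-(1:ℝ)/2) * exp (-(x - m₁) ^ 2 / (2 * v₁)) ↔
      v₀ * (x - m₁) ^ 2 - v₁ * (x - m₀) ^ 2 = v₀ * v₁ * log (v₀ / v₁) := by
  rw [rpow_def_of_pos (by positivity), rpow_def_of_pos (by positivity), ← exp_add, ← exp_add,
    exp_eq_exp, log_mul (by positivity) h₀.ne', log_mul (by positivity) h₁.ne',
    log_div h₀.ne' h₁.ne']
  constructor <;> intro h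
  · field_simp at h
    linear_combination h
  · field_simp
    linear_combination h

theorem sub_sq_eq_iff_eq_add_sqrt {c d t : ℝ} (hcd : c ^ 2 ≤ d) (ht : 0 < t) :
    (t - c) ^ 2 = d ↔ t = c + √d := by
  have hd : 0 ≤ d := (sq_nonneg c).trans hcd
  rw [← sq_sqrt hd, sq_eq_sq_iff_eq_or_eq_neg, sq_sqrt hd]
  have hc : c ≤ √d := (le_abs_self c).trans (abs_le_sqrt hcd)
  constructor
  · rintro (h | h) <;> linarith
  · intro h
    exact Or.inl (by linarith)

theorem log_div_div_sub_nonneg {x y : ℝ} (hx : 0 < x) (hy : 0 < y) :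
    0 ≤ log (x / y) / (x - y) := by
  rw [log_div hx.ne' hy.ne']
  rcases le_total x y with hxy | hyx
  · exact div_nonneg_of_nonpos (by linarith [log_le_log hx hxy]) (by linarith)
  · exact div_nonneg (by linarith [log_le_log hy hyx]) (by linarith)

theorem psk_threshold_equation_iff {n w γ a₀ a₁ : ℝ} (hn : n ≠ 0) (hw : w ≠ 0) (hγ : γ ≠ 0)
    (ha : a₀ ≠ a₁) (L T : ℝ) :
    n * w ^ 2 * (2 * a₀ * γ + 1) * (T - n * w * (a₁ * γ + 1)) ^ 2 -
        n * w ^ 2 * (2 * a₁ * γ + 1) * (T - n * w * (a₀ * γ + 1)) ^ 2 =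
        n * w ^ 2 * (2 * a₀ * γ + 1) * (n * w ^ 2 * (2 * a₁ * γ + 1)) * L ↔
      (T - n * w / 2) ^ 2 =
        (n * w) ^ 2 * ((a₀ * γ + 1 / 2) * (a₁ * γ + 1 / 2) * (1 + 2 * L / (n * γ * (a₀ - a₁)))) := by
  have ha' : a₀ - a₁ ≠ 0 := sub_ne_zero.mpr ha
  have hfactor :
      n * w ^ 2 * (2 * a₀ * γ + 1) * (T - n * w * (a₁ * γ + 1)) ^ 2 -
        n * w ^ 2 * (2 * a₁ * γ + 1) * (T - n * w * (a₀ * γ + 1)) ^ 2 -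
        n * w ^ 2 * (2 * a₀ * γ + 1) * (n * w ^ 2 * (2 * a₁ * γ + 1)) * L =
      2 * n * w ^ 2 * γ * (a₀ - a₁) * ((T - n * w / 2) ^ 2 -
        (n * w) ^ 2 * ((a₀ * γ + 1 / 2) * (a₁ * γ + 1 / 2) * (1 + 2 * L / (n * γ * (a₀ - a₁))))) := by
    field_simp
    ring
  rw [← sub_eq_zero, hfactor, mul_eq_zero, sub_eq_zero]
  simp [hn, hw, hγ, ha']

theorem one_le_one_add_log_ratio {n γ a₀ a₁ : ℝ} (hn : 0 < n) (hγ : 0 ≤ γ) (ha₀ : 0 ≤ a₀)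
    (ha₁ : 0 ≤ a₁) :
    1 ≤ 1 + 2 * log ((2 * a₀ * γ + 1) / (2 * a₁ * γ + 1)) / (n * γ * (a₀ - a₁)) := by
  have h := log_div_div_sub_nonneg (x := 2 * a₀ * γ + 1) (y := 2 * a₁ * γ + 1)
    (by positivity) (by positivity)
  rw [show 2 * a₀ * γ + 1 - (2 * a₁ * γ + 1) = 2 * (γ * (a₀ - a₁)) by ring] at h
  generalize a₀ - a₁ = δ at h ⊢
  have hrw : 2 * log ((2 * a₀ * γ + 1) / (2 * a₁ * γ + 1)) / (n * γ * δ) =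
      4 / n * (log ((2 * a₀ * γ + 1) / (2 * a₁ * γ + 1)) / (2 * (γ * δ))) := by
    ring
  rw [hrw, le_add_iff_nonneg_right]
  positivity

theorem quarter_le_psk_threshold_radicand {n γ a₀ a₁ : ℝ} (hn : 0 < n) (hγ : 0 ≤ γ)
    (ha₀ : 0 ≤ a₀) (ha₁ : 0 ≤ a₁) :
    1 / 4 ≤ (a₀ * γ + 1 / 2) * (a₁ * γ + 1 / 2) *
      (1 + 2 * log ((2 * a₀ * γ + 1) / (2 * a₁ * γ + 1)) / (n * γ * (a₀ - a₁))) := by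
  have hprod : 1 / 4 ≤ (a₀ * γ + 1 / 2) * (a₁ * γ + 1 / 2) := by
    nlinarith [mul_nonneg ha₀ hγ, mul_nonneg ha₁ hγ]
  exact hprod.trans (le_mul_of_one_le_right (by positivity)
    (one_le_one_add_log_ratio hn hγ ha₀ ha₁))

theorem stmt12_general (a0 a1 : ℝ) (ha0 : 0 ≤ a0) (ha1 : 0 ≤ a1) (hne : a0 ≠ a1)
    (Ps Nw : ℝ) (hPs : 0 < Ps) (hNw : 0 < Nw)
    (N : ℕ) (hN : 0 < N)
    (γ s0 s1 : ℝ) (hγ : γ = Ps / Nw)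
    (hs0 : s0 = a0 * Ps + Nw) (hs1 : s1 = a1 * Ps + Nw)
    (μ ς : Fin 2 → ℝ)
    (hμ0 : μ 0 = N * s0) (hμ1 : μ 1 = N * s1)
    (hς0 : ς 0 = 2 * N * a0 * Ps * Nw + N * Nw ^ 2)
    (hς1 : ς 1 = 2 * N * a1 * Ps * Nw + N * Nw ^ 2)
    (T : ℝ) (hT : 0 < T) :
    (2 * Real.pi * ς 0) ^ (-(1:ℝ)/2) * Real.exp (-(T - μ 0) ^ 2 / (2 * ς 0)) =
        (2 * Real.pi * ς 1) ^ (-(1:ℝ)/2) * Real.exp (-(T - μ 1) ^ 2 / (2 * ς 1)) ↔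
      T = N * Nw / 2 + N * Nw * Real.sqrt ((a0 * γ + 1 / 2) * (a1 * γ + 1 / 2) *
        (1 + 2 * Real.log ((2 * a0 * γ + 1) / (2 * a1 * γ + 1)) / (N * γ * (a0 - a1)))) := by
  have hN' : (0 : ℝ) < N := by exact_mod_cast hN
  have hγpos : 0 < γ := by rw [hγ]; positivity
  have hPs' : Ps = γ * Nw := by rw [hγ]; field_simp
  have hς0' : ς 0 = N * Nw ^ 2 * (2 * a0 * γ + 1) := by rw [hς0, hPs']; ring
  have hς1' : ς 1 = N * Nw ^ 2 * (2 * a1 * γ + 1) := by rw [hς1, hPs']; ring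
  have hμ0' : μ 0 = N * Nw * (a0 * γ + 1) := by rw [hμ0, hs0, hPs']; ring
  have hμ1' : μ 1 = N * Nw * (a1 * γ + 1) := by rw [hμ1, hs1, hPs']; ring
  have hlog : log (ς 0 / ς 1) = log ((2 * a0 * γ + 1) / (2 * a1 * γ + 1)) := by
    rw [hς0', hς1', mul_div_mul_left _ _ (by positivity)]
  have hquarter := quarter_le_psk_threshold_radicand hN' hγpos.le ha0 ha1
  have hD : (N * Nw / 2) ^ 2 ≤ (N * Nw) ^ 2 * ((a0 * γ + 1 / 2) * (a1 * γ + 1 / 2) *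
      (1 + 2 * log ((2 * a0 * γ + 1) / (2 * a1 * γ + 1)) / (N * γ * (a0 - a1)))) := by
    nlinarith [sq_nonneg ((N : ℝ) * Nw)]
  rw [gaussian_density_eq_iff (by rw [hς0']; positivity) (by rw [hς1']; positivity), hlog,
    hς0', hς1', hμ0', hμ1', psk_threshold_equation_iff hN'.ne' hNw.ne' hγpos.ne' hne,
    sub_sq_eq_iff_eq_add_sqrt hD hT, sqrt_mul' _ (by linarith), sqrt_sq (by positivity)]

/-- PSK-source suboptimal detector threshold: equating the two Gaussian densities with means
`μᵢ = Nσᵢ²` and variances `ςᵢ = 2N|hᵢ|²P_sN_w + NN_w²` yields the stated positive root. -/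
theorem stmt12 (a0 a1 : ℝ) (ha0 : 0 ≤ a0) (ha1 : 0 ≤ a1) (hne : a0 ≠ a1)
    (Ps Nw : ℝ) (hPs : 0 < Ps) (hNw : 0 < Nw)
    (N : ℕ) (hN : 0 < N)
    (γ s0 s1 : ℝ) (hγ : γ = Ps / Nw)
    (hs0 : s0 = a0 * Ps + Nw) (hs1 : s1 = a1 * Ps + Nw)
    (μ ς : Fin 2 → ℝ)
    (hμ0 : μ 0 = N * s0) (hμ1 : μ 1 = N * s1)
    (hς0 : ς 0 = 2 * N * a0 * Ps * Nw + N * Nw ^ 2)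
    (hς1 : ς 1 = 2 * N * a1 * Ps * Nw + N * Nw ^ 2)
    (hdisc : 0 ≤ 1 + 2 * Real.log ((2 * a0 * γ + 1) / (2 * a1 * γ + 1)) / (N * γ * (a0 - a1)))
    (T : ℝ) (hT : 0 < T) :
    (2 * Real.pi * ς 0) ^ (-(1:ℝ)/2) * Real.exp (-(T - μ 0) ^ 2 / (2 * ς 0)) =
        (2 * Real.pi * ς 1) ^ (-(1:ℝ)/2) * Real.exp (-(T - μ 1) ^ 2 / (2 * ς 1)) ↔
      T = N * Nw / 2 + N * Nw * Real.sqrt ((a0 * γ + 1 / 2) * (a1 * γ + 1 / 2) *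
        (1 + 2 * Real.log ((2 * a0 * γ + 1) / (2 * a1 * γ + 1)) / (N * γ * (a0 - a1)))) :=
  stmt12_general a0 a1 ha0 ha1 hne Ps Nw hPs hNw N hN γ s0 s1 hγ hs0 hs1 μ ς hμ0 hμ1 hς0 hς1 T hT
end

section
/- Fix N > 0 and |h₀| ≠ |h₁| (both nonnegative). Then lim_{γ→∞} Q(√(N/2) |√(|h₀|²γ + 1) − √(|h₁|²γ + 1)|) = 0. Moreover |√(|h₀|²γ + 1) − √(|h₁|²γ + 1)| / √γ → ||h₀| − |h₁|| as γ → ∞, so the BER is asymptotically Q(√(Nγ/2) ||h₀| − |h₁||). -/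
/-!
`gaussQ` is the tail integral of an integrable density, so it vanishes at `+∞`.
Since `√(aγ + 1) / √γ = √(a + γ⁻¹) → √a`, the difference `√(h₀²γ + 1) − √(h₁²γ + 1)`
behaves like `√γ · (h₀ − h₁)`; for `h₀ ≠ h₁` the argument of `gaussQ` therefore tends to `+∞`.
-/

open Real MeasureTheory Filter

open Set Topology

theorem tendsto_setIntegral_Ioi_atTop_zero {E : Type*} [NormedAddCommGroup E] [NormedSpace ℝ E]
    {μ : Measure ℝ} {f : ℝ → E} {a : ℝ} (hf : IntegrableOn f (Ioi a) μ) :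
    Tendsto (fun x => ∫ t in Ioi x, f t ∂μ) atTop (𝓝 0) := by
  have hempty : ⋂ x : ℝ, Ioi x = ∅ := iInter_eq_empty_iff.mpr fun x => ⟨x, lt_irrefl x⟩
  have := tendsto_setIntegral_of_antitone (fun _ => measurableSet_Ioi)
    (fun _ _ h => Ioi_subset_Ioi h) ⟨a, hf⟩
  rwa [hempty, Measure.restrict_empty, integral_zero_measure] at this

theorem integrable_gaussQ_integrand :
    Integrable fun t : ℝ => (2 * π) ^ (-(1:ℝ)/2) * exp (-t ^ 2 / 2) := by
  convert (integrable_exp_neg_mul_sq (by norm_num : (0:ℝ) < 1/2)).const_mul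
    ((2 * π) ^ (-(1:ℝ)/2)) using 4
  ring

theorem tendsto_gaussQ_atTop : Tendsto gaussQ atTop (𝓝 0) :=
  tendsto_setIntegral_Ioi_atTop_zero (a := 0) integrable_gaussQ_integrand.integrableOn

theorem sqrt_mul_add_one_div_sqrt (a : ℝ) {γ : ℝ} (hγ : 0 < γ) :
    √(a * γ + 1) / √γ = √(a + γ⁻¹) := by
  rw [← sqrt_div' _ hγ.le]
  congr 1
  field_simp

theorem tendsto_sqrt_mul_add_one_div_sqrt (a : ℝ) :
    Tendsto (fun γ => √(a * γ + 1) / √γ) atTop (𝓝 √a) := by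
  have : Tendsto (fun γ : ℝ => √(a + γ⁻¹)) atTop (𝓝 √a) := by
    simpa using (tendsto_const_nhds (x := a)).add tendsto_inv_atTop_zero |>.sqrt
  exact this.congr' <| (eventually_gt_atTop 0).mono fun γ hγ =>
    (sqrt_mul_add_one_div_sqrt a hγ).symm

theorem tendsto_abs_sqrt_sub_sqrt_div_sqrt (a b : ℝ) :
    Tendsto (fun γ => |√(a * γ + 1) - √(b * γ + 1)| / √γ) atTop (𝓝 |√a - √b|) := by
  have := ((tendsto_sqrt_mul_add_one_div_sqrt a).sub (tendsto_sqrt_mul_add_one_div_sqrt b)).abs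
  simpa only [← sub_div, abs_div, abs_of_nonneg (sqrt_nonneg _)] using this

theorem tendsto_abs_sqrt_sub_sqrt_atTop {a b : ℝ} (ha : 0 ≤ a) (hb : 0 ≤ b) (hab : a ≠ b) :
    Tendsto (fun γ => |√(a * γ + 1) - √(b * γ + 1)|) atTop atTop := by
  have hlim : 0 < |√a - √b| :=
    abs_pos.mpr (sub_ne_zero.mpr fun h => hab ((sqrt_inj ha hb).mp h))
  refine (tendsto_sqrt_atTop.atTop_mul_pos hlim (tendsto_abs_sqrt_sub_sqrt_div_sqrt a b)).congr' ?_
  filter_upwards [eventually_gt_atTop 0] with γ hγ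
  exact mul_div_cancel₀ _ (sqrt_pos.mpr hγ).ne'

/-- No error floor with the PSK ambient source: the BER tends to `0` as the SNR `γ → ∞`,
and `|√(|h₀|²γ+1) − √(|h₁|²γ+1)|/√γ → ||h₀| − |h₁||`. -/
theorem stmt15 (h0 h1 : ℝ) (hh0 : 0 ≤ h0) (hh1 : 0 ≤ h1) (hne : h0 ≠ h1)
    (N : ℝ) (hN : 0 < N) :
    Tendsto (fun γ : ℝ =>
        gaussQ (Real.sqrt (N / 2) * |Real.sqrt (h0 ^ 2 * γ + 1) - Real.sqrt (h1 ^ 2 * γ + 1)|))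
      atTop (nhds 0) ∧
    Tendsto (fun γ : ℝ =>
        |Real.sqrt (h0 ^ 2 * γ + 1) - Real.sqrt (h1 ^ 2 * γ + 1)| / Real.sqrt γ)
      atTop (nhds |h0 - h1|) := by
  have hsq : h0 ^ 2 ≠ h1 ^ 2 := fun h => hne ((pow_left_inj₀ hh0 hh1 two_ne_zero).mp h)
  refine ⟨tendsto_gaussQ_atTop.comp ?_, ?_⟩
  · exact (tendsto_abs_sqrt_sub_sqrt_atTop (sq_nonneg h0) (sq_nonneg h1) hsq).const_mul_atTop
      (sqrt_pos.mpr (half_pos hN))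
  · have := tendsto_abs_sqrt_sub_sqrt_div_sqrt (h0 ^ 2) (h1 ^ 2)
    rwa [Real.sqrt_sq hh0, Real.sqrt_sq hh1] at this
end
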